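/- arXiv:2006.05637 — 2 statements merged into one kernel-verified Lean document; each statement's English description precedes it below -/
import Mathlib

section
/- With A as above and ρ > 0, the matrix Λ = I_{2LM} + A Aᵀ/ρ satisfies Λ = (1/ρ)·(Λ₁ + Λ₂) ⊗ I_M, where Λ₁ = (ρ I_L + Re(QQ^H)) ⊗ [[1,0],[0,1]] and Λ₂ = Im(QQ^H) ⊗ [[0,-1],[1,0]]; consequently, if Λ₁ + Λ₂ is invertible, then Λ⁻¹ = ρ (Λ₁ + Λ₂)⁻¹ ⊗ I_M. -/
/-!
The map `Q ↦ Re Q ⊗ 1 + Im Q ⊗ E` is multiplicative when `E² = -1` and sends `ᴴ` to `ᵀ` when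
`Eᵀ = -E`; both hold for `E = J ⊗ I_M` with `J` the rotation by a right angle. Hence `A Aᵀ` is the
image of `Q Qᴴ`, and `ρ Λ = ρ I + (image of Q Qᴴ)` is `(Λ₁ + Λ₂) ⊗ I_M` after reassociating the
indices. Inversion commutes with scalars, reindexing and Kronecker products, which gives `Λ⁻¹`.
-/

open Matrix Kronecker

namespace Matrix

variable {l m n o p : Type*}

section Kronecker

variable {α : Type*} [Ring α]

theorem neg_kronecker (A : Matrix l m α) (B : Matrix n p α) : (-A) ⊗ₖ B = -(A ⊗ₖ B) := by
  ext; simp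

theorem kronecker_neg (A : Matrix l m α) (B : Matrix n p α) : A ⊗ₖ (-B) = -(A ⊗ₖ B) := by
  ext; simp

theorem sub_kronecker (A₁ A₂ : Matrix l m α) (B : Matrix n p α) :
    (A₁ - A₂) ⊗ₖ B = A₁ ⊗ₖ B - A₂ ⊗ₖ B := by
  ext; simp [sub_mul]

end Kronecker

theorem map_re_mul [Fintype m] (Q : Matrix l m ℂ) (P : Matrix m n ℂ) :
    (Q * P).map Complex.re =
      Q.map Complex.re * P.map Complex.re - Q.map Complex.im * P.map Complex.im := by
  ext i j
  simp [mul_apply, Complex.re_sum, Complex.mul_re, Finset.sum_sub_distrib]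

theorem map_im_mul [Fintype m] (Q : Matrix l m ℂ) (P : Matrix m n ℂ) :
    (Q * P).map Complex.im =
      Q.map Complex.re * P.map Complex.im + Q.map Complex.im * P.map Complex.re := by
  ext i j
  simp [mul_apply, Complex.im_sum, Complex.mul_im, Finset.sum_add_distrib]

theorem map_re_conjTranspose (Q : Matrix l m ℂ) : Qᴴ.map Complex.re = (Q.map Complex.re)ᵀ := by
  ext i j
  simp

theorem map_im_conjTranspose (Q : Matrix l m ℂ) : Qᴴ.map Complex.im = -(Q.map Complex.im)ᵀ := by
  ext i j
  simp

variable [DecidableEq n]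

def realRepr (E : Matrix n n ℝ) (Q : Matrix l m ℂ) : Matrix (l × n) (m × n) ℝ :=
  Q.map Complex.re ⊗ₖ 1 + Q.map Complex.im ⊗ₖ E

theorem realRepr_mul [Fintype n] [Fintype o] {E : Matrix n n ℝ} (hE : E * E = -1)
    (Q : Matrix l o ℂ) (P : Matrix o m ℂ) :
    realRepr E (Q * P) = realRepr E Q * realRepr E P := by
  rw [realRepr, realRepr, realRepr, Matrix.add_mul, Matrix.mul_add, Matrix.mul_add,
    ← mul_kronecker_mul, ← mul_kronecker_mul, ← mul_kronecker_mul, ← mul_kronecker_mul,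
    Matrix.mul_one, Matrix.one_mul, Matrix.mul_one, hE, map_re_mul, map_im_mul, sub_kronecker,
    add_kronecker, kronecker_neg]
  abel

theorem realRepr_conjTranspose {E : Matrix n n ℝ} (hE : Eᵀ = -E) (Q : Matrix l m ℂ) :
    realRepr E Qᴴ = (realRepr E Q)ᵀ := by
  simp only [realRepr, transpose_add, ← kroneckerMap_transpose, transpose_one, hE,
    map_re_conjTranspose, map_im_conjTranspose, neg_kronecker, kronecker_neg]

theorem reindex_prodAssoc_realRepr_kronecker_one [DecidableEq o] (E : Matrix n n ℝ)
    (Q : Matrix l m ℂ) :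
    reindex (Equiv.prodAssoc l n o) (Equiv.prodAssoc m n o) (realRepr E Q ⊗ₖ (1 : Matrix o o ℝ)) =
      realRepr (E ⊗ₖ 1) Q := by
  simp only [realRepr, add_kronecker, reindex_apply, submatrix_add, Pi.add_apply,
    kronecker_assoc', one_kronecker_one]

theorem inv_smul_of_ne_zero {K : Type*} [Field K] [Fintype n] (A : Matrix n n K) {k : K}
    (hk : k ≠ 0) : (k • A)⁻¹ = k⁻¹ • A⁻¹ := by
  by_cases hA : IsUnit A.det
  · exact inv_smul' A (Units.mk0 k hk) hA
  · have hkA : ¬IsUnit (k • A).det := by simpa [det_smul, hk] using hA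
    rw [nonsing_inv_apply_not_isUnit A hA, nonsing_inv_apply_not_isUnit _ hkA, smul_zero]

section Rotation

variable {α : Type*} [CommRing α]

theorem rotation_mul_self :
    (!![0, -1; 1, 0] : Matrix (Fin 2) (Fin 2) α) * !![0, -1; 1, 0] = -1 := by
  ext i j; fin_cases i <;> fin_cases j <;> simp

theorem rotation_transpose :
    (!![0, -1; 1, 0] : Matrix (Fin 2) (Fin 2) α)ᵀ = -!![0, -1; 1, 0] := by
  ext i j; fin_cases i <;> fin_cases j <;> simp

end Rotation

end Matrix

/-- With `A = Re(Q) ⊗ D₁ + Im(Q) ⊗ D₂`, the matrix `Λ = I + AAᵀ/ρ` factors as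
`(1/ρ)·(Λ₁ + Λ₂) ⊗ I_M` (up to the canonical reindexing of the Kronecker product),
and hence `Λ⁻¹ = ρ (Λ₁ + Λ₂)⁻¹ ⊗ I_M` whenever `Λ₁ + Λ₂` is invertible. -/
theorem Lambda_kronecker_factorization {L N M : ℕ} (Q : Matrix (Fin L) (Fin N) ℂ)
    (ρ : ℝ) (hρ : 0 < ρ) :
    let D1 : Matrix (Fin 2 × Fin M) (Fin 2 × Fin M) ℝ :=
      (1 : Matrix (Fin 2) (Fin 2) ℝ) ⊗ₖ (1 : Matrix (Fin M) (Fin M) ℝ)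
    let D2 : Matrix (Fin 2 × Fin M) (Fin 2 × Fin M) ℝ :=
      (!![0, -1; 1, 0] : Matrix (Fin 2) (Fin 2) ℝ) ⊗ₖ (1 : Matrix (Fin M) (Fin M) ℝ)
    let A : Matrix (Fin L × (Fin 2 × Fin M)) (Fin N × (Fin 2 × Fin M)) ℝ :=
      (Q.map Complex.re) ⊗ₖ D1 + (Q.map Complex.im) ⊗ₖ D2
    let Λ : Matrix (Fin L × (Fin 2 × Fin M)) (Fin L × (Fin 2 × Fin M)) ℝ :=
      1 + ρ⁻¹ • (A * Aᵀ)
    let Λ₁ : Matrix (Fin L × Fin 2) (Fin L × Fin 2) ℝ :=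
      (ρ • (1 : Matrix (Fin L) (Fin L) ℝ) + (Q * Qᴴ).map Complex.re)
        ⊗ₖ (1 : Matrix (Fin 2) (Fin 2) ℝ)
    let Λ₂ : Matrix (Fin L × Fin 2) (Fin L × Fin 2) ℝ :=
      ((Q * Qᴴ).map Complex.im) ⊗ₖ (!![0, -1; 1, 0] : Matrix (Fin 2) (Fin 2) ℝ)
    let e := Equiv.prodAssoc (Fin L) (Fin 2) (Fin M)
    Λ = ρ⁻¹ • (Matrix.reindex e e ((Λ₁ + Λ₂) ⊗ₖ (1 : Matrix (Fin M) (Fin M) ℝ))) ∧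
    (IsUnit (Λ₁ + Λ₂) →
      Λ⁻¹ = ρ • (Matrix.reindex e e ((Λ₁ + Λ₂)⁻¹ ⊗ₖ (1 : Matrix (Fin M) (Fin M) ℝ)))) := by
  intro D1 D2 A Λ Λ₁ Λ₂ e
  have hρ0 : ρ ≠ 0 := hρ.ne'
  have hD2sq : D2 * D2 = -1 := by
    rw [← mul_kronecker_mul, rotation_mul_self, Matrix.one_mul, neg_kronecker, one_kronecker_one]
  have hD2T : D2ᵀ = -D2 := by
    rw [← kroneckerMap_transpose, rotation_transpose, transpose_one, neg_kronecker]
  have hAAt : A * Aᵀ = realRepr D2 (Q * Qᴴ) := by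
    have hA : A = realRepr D2 Q := by rw [realRepr, ← one_kronecker_one]
    rw [realRepr_mul hD2sq, realRepr_conjTranspose hD2T, hA]
  have hreindex : reindex e e ((Λ₁ + Λ₂) ⊗ₖ (1 : Matrix (Fin M) (Fin M) ℝ)) =
      ρ • 1 + realRepr D2 (Q * Qᴴ) := by
    have hΛ₁₂ : Λ₁ + Λ₂ = ρ • 1 + realRepr !![0, -1; 1, 0] (Q * Qᴴ) := by
      simp only [Λ₁, Λ₂, realRepr, add_kronecker, smul_kronecker, one_kronecker_one, add_assoc]
    rw [hΛ₁₂, add_kronecker, smul_kronecker, one_kronecker_one,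
      ← reindex_prodAssoc_realRepr_kronecker_one]
    simp only [e, reindex_apply, submatrix_add, submatrix_smul, submatrix_one_equiv, Pi.add_apply,
      Pi.smul_apply]
  have hfactor : Λ = ρ⁻¹ • reindex e e ((Λ₁ + Λ₂) ⊗ₖ (1 : Matrix (Fin M) (Fin M) ℝ)) := by
    rw [hreindex, smul_add, smul_smul, inv_mul_cancel₀ hρ0, one_smul, ← hAAt]
  refine ⟨hfactor, fun _ => ?_⟩
  rw [hfactor, inv_smul_of_ne_zero _ (inv_ne_zero hρ0), inv_reindex, inv_kronecker, inv_one,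
    inv_inv]
end

section
/- Consider the consensus QP from ALADIN specialized to group Lasso: minimize (1/2)‖z₀ − ξ₀‖² + g₀ᵀz₀ + Σᵢ [(ρ/2)‖zᵢ − ξᵢ‖² + gᵢᵀzᵢ] subject to z₀ = Σᵢ Aᵢzᵢ, where g₀ = z₀ᵏ − ξ₀ + λᵏ and gᵢ = ρ(zᵢᵏ − ξᵢ) + Aᵢᵀλᵏ, and suppose ξ₀ = (z₀ᵏ + b − λᵏ)/2 and the previous feasibility z₀ᵏ = Σᵢ Aᵢzᵢᵏ holds. Then the multiplier increment Δλ = λ^{k+1} − λᵏ satisfies (I + AAᵀ/ρ)Δλ = 2 Σᵢ Aᵢ(zᵢᵏ − ξᵢ), i.e., Δλ = 2(I + AAᵀ/ρ)⁻¹ Σᵢ Aᵢ(zᵢᵏ − ξᵢ). -/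
open Matrix

/-
Write `Δ = λ^{k+1} − λᵏ` and `S = Σᵢ AᵢAᵢᵀ`. Multiplying the KKT condition for `zᵢ^{k+1}` by `Aᵢ`
and summing gives `Σᵢ Aᵢzᵢ^{k+1} = z₀ᵏ − 2 Σᵢ Aᵢ(zᵢᵏ − ξᵢ) + ρ⁻¹ S Δ`, using the previous
feasibility `z₀ᵏ = Σᵢ Aᵢzᵢᵏ`. The consensus constraint turns the left side into
`b − λ^{k+1}`, and `z₀ᵏ = b − λᵏ`, so the identity rearranges to `(I + ρ⁻¹ S) Δ = 2 Σᵢ Aᵢ(zᵢᵏ − ξᵢ)`.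
For `ρ > 0` the matrix `I + ρ⁻¹ S` is positive definite, hence invertible.
-/

namespace Matrix

variable {ι m : Type*} [Fintype m] {n : ι → Type*} [∀ i, Fintype (n i)]

theorem sum_mulVec_add_smul_transpose_mulVec {R : Type*} [CommRing R] (s : Finset ι)
    (A : ∀ i, Matrix m (n i) R) (x : ∀ i, n i → R) (c : R) (v : m → R) :
    ∑ i ∈ s, A i *ᵥ (x i + c • (A i)ᵀ *ᵥ v)
      = ∑ i ∈ s, A i *ᵥ x i + c • (∑ i ∈ s, A i * (A i)ᵀ) *ᵥ v := by
  simp only [mulVec_add, mulVec_smul, mulVec_mulVec, Finset.sum_add_distrib, sum_mulVec,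
    Finset.smul_sum]

theorem posDef_one_add_smul_sum_mul_transpose [DecidableEq m] (s : Finset ι)
    (A : ∀ i, Matrix m (n i) ℝ) {c : ℝ} (hc : 0 ≤ c) :
    (1 + c • ∑ i ∈ s, A i * (A i)ᵀ).PosDef :=
  PosDef.one.add_posSemidef <|
    (posSemidef_sum s fun i _ => by simpa using posSemidef_self_mul_conjTranspose (A i)).smul hc

end Matrix

theorem aladin_consensus_step_general {N m : ℕ} (n : Fin N → ℕ)
    (A : ∀ i : Fin N, Matrix (Fin m) (Fin (n i)) ℝ) (ρ : ℝ) (hρ : 0 < ρ)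
    (b lamk lam' z0k z0' : Fin m → ℝ)
    (zk z' ξ : ∀ i : Fin N, Fin (n i) → ℝ)
    -- the previous primal/dual iterate satisfies the previous KKT conditions:
    (hz0k : z0k = b - lamk)
    (hfeask : z0k = ∑ i, (A i).mulVec (zk i))
    -- the KKT conditions of the consensus QP:
    (hKKT0 : z0' = b - lam')
    (hKKTi : ∀ i, z' i = 2 • ξ i - zk i + ρ⁻¹ • (A i)ᵀ.mulVec (lam' - lamk))
    (hKKTc : z0' = ∑ i, (A i).mulVec (z' i)) :
    let Λ : Matrix (Fin m) (Fin m) ℝ := 1 + ρ⁻¹ • ∑ i, A i * (A i)ᵀ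
    Λ.mulVec (lam' - lamk) = 2 • ∑ i, (A i).mulVec (zk i - ξ i) ∧
    lam' - lamk = Λ⁻¹.mulVec (2 • ∑ i, (A i).mulVec (zk i - ξ i)) := by
  intro Λ
  set Δ := lam' - lamk
  set W := ∑ i, A i *ᵥ (zk i - ξ i)
  have hcons : b - lam' = (b - lamk) - 2 • W + ρ⁻¹ • (∑ i, A i * (A i)ᵀ) *ᵥ Δ :=
    calc b - lam' = ∑ i, A i *ᵥ ((zk i - 2 • (zk i - ξ i)) + ρ⁻¹ • (A i)ᵀ *ᵥ Δ) := by
          rw [← hKKT0, hKKTc]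
          refine Finset.sum_congr rfl fun i _ => ?_
          rw [hKKTi i]
          abel_nf
      _ = (b - lamk) - 2 • W + ρ⁻¹ • (∑ i, A i * (A i)ᵀ) *ᵥ Δ := by
          simp only [sum_mulVec_add_smul_transpose_mulVec, mulVec_sub, mulVec_smul,
            Finset.sum_sub_distrib, ← Finset.smul_sum, ← hfeask, hz0k, W]
  have hΛ : Λ *ᵥ Δ = 2 • W := by
    rw [add_mulVec, one_mulVec, smul_mulVec]
    linear_combination (norm := module) -hcons
  have hΛpd : Λ.PosDef := posDef_one_add_smul_sum_mul_transpose _ A (inv_nonneg.2 hρ.le)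
  let := hΛpd.isUnit.invertible
  exact ⟨hΛ, (inv_mulVec_eq_vec hΛ.symm).symm⟩

/-- In the consensus QP of ALADIN specialized to group Lasso, the KKT conditions
yield the multiplier increment equation `(I + AAᵀ/ρ)Δλ = 2 Σᵢ Aᵢ(zᵢᵏ − ξᵢ)`,
i.e. `Δλ = 2(I + AAᵀ/ρ)⁻¹ Σᵢ Aᵢ(zᵢᵏ − ξᵢ)`. -/
theorem aladin_consensus_step {N m : ℕ} (n : Fin N → ℕ)
    (A : ∀ i : Fin N, Matrix (Fin m) (Fin (n i)) ℝ) (ρ : ℝ) (hρ : 0 < ρ)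
    (b lamk lam' z0k z0' ξ0 : Fin m → ℝ)
    (zk z' ξ : ∀ i : Fin N, Fin (n i) → ℝ)
    -- the previous primal/dual iterate satisfies the previous KKT conditions:
    (hz0k : z0k = b - lamk)
    (hfeask : z0k = ∑ i, (A i).mulVec (zk i))
    -- the parallel step for the 0-th agent:
    (hξ0 : ξ0 = (1 / 2) • (z0k + b - lamk))
    -- the KKT conditions of the consensus QP:
    (hKKT0 : z0' = b - lam')
    (hKKTi : ∀ i, z' i = 2 • ξ i - zk i + ρ⁻¹ • (A i)ᵀ.mulVec (lam' - lamk))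
    (hKKTc : z0' = ∑ i, (A i).mulVec (z' i)) :
    let Λ : Matrix (Fin m) (Fin m) ℝ := 1 + ρ⁻¹ • ∑ i, A i * (A i)ᵀ
    Λ.mulVec (lam' - lamk) = 2 • ∑ i, (A i).mulVec (zk i - ξ i) ∧
    lam' - lamk = Λ⁻¹.mulVec (2 • ∑ i, (A i).mulVec (zk i - ξ i)) :=
  aladin_consensus_step_general n A ρ hρ b lamk lam' z0k z0' zk z' ξ hz0k hfeask hKKT0 hKKTi hKKTc
end
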